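/- arXiv:2002.00828 — 3 statements merged into one kernel-verified Lean document; each statement's English description precedes it below -/
import Mathlib

section
/- Let u ∈ ℤ_p with |u − 1| ≤ p^{-1} and let j ∈ ℤ. For x ∈ K with |x| < 1, one has log(1+x) = j·log(u) (where log(u) means log(1+(u−1))) if and only if there exist an integer n ≥ 0 and ζ ∈ K with ζ^{p^n} = 1 and 1+x = u^j ζ. In other words, the zeros of ℓ_j = log(1+x)/log u − j in the open unit disk of K are exactly the points u^j ζ − 1 with ζ a root of unity of p-power order. -/
/-!
For `‖x‖ < 1` the binomial theorem gives
`((1 + x) ^ N - 1) / N = ∑ₖ C(N - 1, k - 1) xᵏ / k`, and when `N = pⁿ → 0` in `K` the coefficients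
`C(N - 1, k - 1)` tend to `(-1) ^ (k - 1)`; since `‖1 / k‖ ≤ k`, dominated convergence yields
`log (1 + x) = lim ((1 + x) ^ pⁿ - 1) / pⁿ`. This limit formula makes `a ↦ log (a - 1)` a
homomorphism on the disc `‖a - 1‖ < 1`: the cross term of `((ab) ^ pⁿ - 1) / pⁿ` is
`((a ^ pⁿ - 1) / pⁿ) * (b ^ pⁿ - 1)`, and `b ^ pⁿ - 1 = pⁿ * ((b ^ pⁿ - 1) / pⁿ) → 0`.
Its kernel consists of the `p`-power roots of unity: if `log (a - 1) = 0` then `a ^ pⁿ - 1 → 0`,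
while `log t = t + (terms of norm ≤ ‖t‖ / 2)` for small `t` forces `log (a ^ pⁿ - 1) = 0` to mean
`a ^ pⁿ = 1`. The theorem is this kernel computation applied to `ζ = u⁻ʲ (1 + x)`.
-/

/-- `padicLogOnePlus x` is `log(1+x)`, the sum of the series `Σ_{n ≥ 1} (-1)^{n+1} x^n / n`
(the `n = 0` term below vanishes since division by `0` yields `0`). -/
noncomputable def padicLogOnePlus {K : Type*} [NormedField K] (x : K) : K :=
  ∑' n : ℕ, (-1 : K) ^ (n + 1) * x ^ n / (n : K)

open Filter Topology Finset

theorem Padic.inv_le_norm_natCast (p : ℕ) [Fact p.Prime] (k : ℕ) : (k : ℝ)⁻¹ ≤ ‖(k : ℚ_[p])‖ := by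
  rcases eq_or_ne k 0 with rfl | hk
  · simp
  have hp : 0 < p := (Fact.out : p.Prime).pos
  rw [Padic.norm_eq_zpow_neg_valuation (by exact_mod_cast hk), Padic.valuation_natCast, zpow_neg,
    zpow_natCast]
  exact inv_anti₀ (by positivity)
    (by exact_mod_cast Nat.le_of_dvd (Nat.pos_of_ne_zero hk) pow_padicValNat_dvd)

theorem pow_sub_one_div_natCast_eq_tsum {K : Type*} [Field K] [CharZero K] [TopologicalSpace K]
    (x : K) {N : ℕ} (hN : N ≠ 0) :
    ((1 + x) ^ N - 1) / N = ∑' k : ℕ, ((N - 1).choose (k - 1) : K) * x ^ k / k := by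
  obtain ⟨M, rfl⟩ : ∃ M, N = M + 1 := ⟨N - 1, by omega⟩
  rw [tsum_eq_sum (s := range (M + 2)), sum_range_succ', add_comm 1 x, add_pow, sum_range_succ']
  · simp only [Nat.add_sub_cancel, one_pow, mul_one, pow_zero, Nat.choose_zero_right,
      Nat.cast_one, add_sub_cancel_right, CharP.cast_eq_zero, div_zero, add_zero, Finset.sum_div]
    refine sum_congr rfl fun k _ => ?_
    have key : ((M + 1 : ℕ) : K) * (M.choose k) = ((M + 1).choose (k + 1)) * ((k + 1 : ℕ) : K) := by
      exact_mod_cast Nat.add_one_mul_choose_eq M k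
    rw [div_eq_div_iff (Nat.cast_ne_zero.2 M.succ_ne_zero) (Nat.cast_ne_zero.2 k.succ_ne_zero)]
    linear_combination (-x ^ (k + 1)) * key
  · intro k hk
    rw [mem_range, not_lt] at hk
    rw [Nat.choose_eq_zero_of_lt (by omega), Nat.cast_zero, zero_mul, zero_div]

theorem tendsto_natCast_choose_sub_one {K : Type*} [Field K] [CharZero K] [TopologicalSpace K]
    [IsTopologicalRing K] {ι : Type*} {l : Filter ι} {N : ι → ℕ} (hN0 : ∀ i, N i ≠ 0)
    (hN : Tendsto (fun i => (N i : K)) l (𝓝 0)) (m : ℕ) :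
    Tendsto (fun i => ((N i - 1).choose m : K)) l (𝓝 ((-1) ^ m)) := by
  have hval : (descPochhammer K m).eval (0 - 1) / m.factorial = (-1) ^ m := by
    rw [zero_sub, descPochhammer_eval_eq_ascPochhammer, show (-1 : K) - m + 1 = -m by ring,
      ascPochhammer_eval_neg_eq_descPochhammer, descPochhammer_eval_eq_descFactorial,
      Nat.descFactorial_self, mul_div_assoc, div_self (Nat.cast_ne_zero.2 m.factorial_ne_zero),
      mul_one]
  have hlim := (((descPochhammer K m).continuous.tendsto _).comp (hN.sub_const 1)).div_const
    (m.factorial : K)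
  rw [hval] at hlim
  refine hlim.congr fun i => ?_
  simp [Nat.cast_choose_eq_descPochhammer_div, Nat.cast_sub (Nat.one_le_iff_ne_zero.2 (hN0 i))]

theorem summable_natCast_mul_norm_pow {K : Type*} [NormedField K] {x : K} (hx : ‖x‖ < 1) :
    Summable fun k : ℕ => (k : ℝ) * ‖x‖ ^ k := by
  simpa using summable_pow_mul_geometric_of_norm_lt_one 1 (r := ‖x‖) (by simpa using hx)

theorem padicLogOnePlus_zero {K : Type*} [NormedField K] : padicLogOnePlus (0 : K) = 0 := by
  refine (tsum_congr fun n => ?_).trans tsum_zero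
  rcases n with _ | n <;> simp

theorem ne_zero_of_norm_sub_one_lt {K : Type*} [NormedField K] {a : K} (ha : ‖a - 1‖ < 1) :
    a ≠ 0 := by
  rintro rfl
  simp at ha

section LogSeries

variable {K : Type*} [NormedField K] (hnat : ∀ k : ℕ, (k : ℝ)⁻¹ ≤ ‖(k : K)‖)
include hnat

theorem charZero_of_forall_inv_le_norm_natCast : CharZero K :=
  charZero_of_inj_zero fun k hk => by
    by_contra hk0
    have := hnat k
    rw [hk, norm_zero] at this
    exact (inv_pos.2 (Nat.cast_pos.2 (Nat.pos_of_ne_zero hk0))).not_ge this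

theorem norm_div_natCast_le (y : K) (k : ℕ) : ‖y / k‖ ≤ k * ‖y‖ := by
  rcases eq_or_ne k 0 with rfl | hk
  · simp
  calc ‖y / k‖ = ‖y‖ / ‖(k : K)‖ := norm_div y k
    _ ≤ ‖y‖ / (k : ℝ)⁻¹ := div_le_div_of_nonneg_left (norm_nonneg y) (by positivity) (hnat k)
    _ = k * ‖y‖ := by rw [div_inv_eq_mul, mul_comm]

theorem norm_mul_pow_div_natCast_le {c : K} (hc : ‖c‖ ≤ 1) (x : K) (k : ℕ) :
    ‖c * x ^ k / k‖ ≤ k * ‖x‖ ^ k := by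
  refine (norm_div_natCast_le hnat _ k).trans ?_
  rw [norm_mul, norm_pow]
  gcongr
  exact mul_le_of_le_one_left (by positivity) hc

theorem summable_padicLogOnePlus [CompleteSpace K] {x : K} (hx : ‖x‖ < 1) :
    Summable fun k : ℕ => (-1 : K) ^ (k + 1) * x ^ k / k :=
  .of_norm_bounded (summable_natCast_mul_norm_pow hx) fun k =>
    norm_mul_pow_div_natCast_le hnat (c := (-1) ^ (k + 1)) (by simp) x k

theorem norm_padicLogOnePlus_sub_self_le [IsUltrametricDist K] [CompleteSpace K] {t : K}
    (ht : ‖t‖ ≤ 4⁻¹) : ‖padicLogOnePlus t - t‖ ≤ ‖t‖ / 2 := by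
  have hfirst : (-1 : K) ^ (1 + 1) * t ^ 1 / ((1 : ℕ) : K) = t := by norm_num
  rw [padicLogOnePlus,
    (summable_padicLogOnePlus hnat (ht.trans_lt (by norm_num))).tsum_eq_add_tsum_ite 1, hfirst,
    add_sub_cancel_left]
  refine IsUltrametricDist.norm_tsum_le_of_forall_le_of_nonneg (by positivity) fun k => ?_
  split_ifs with hk
  · simp only [norm_zero]; positivity
  rcases k with _ | _ | k
  · simp only [Nat.cast_zero, div_zero, norm_zero]; positivity
  · exact absurd rfl hk
  have hk2 : ((k + 2 : ℕ) : ℝ) ≤ 2 ^ (k + 1) := by exact_mod_cast Nat.lt_two_pow_self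
  calc ‖(-1 : K) ^ (k + 2 + 1) * t ^ (k + 2) / ((k + 2 : ℕ) : K)‖
      ≤ (k + 2 : ℕ) * ‖t‖ ^ (k + 2) := norm_mul_pow_div_natCast_le hnat (by simp) t (k + 2)
    _ ≤ 2 ^ (k + 1) * (‖t‖ * 4⁻¹ ^ (k + 1)) := by
      rw [pow_succ' ‖t‖]
      gcongr
    _ = ‖t‖ * 2⁻¹ ^ (k + 1) := by
      rw [mul_left_comm, ← mul_pow]; norm_num
    _ ≤ ‖t‖ / 2 := by
      rw [div_eq_mul_inv]
      gcongr
      exact pow_le_of_le_one (by norm_num) (by norm_num) k.succ_ne_zero |>.trans (by norm_num)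

theorem eq_zero_of_padicLogOnePlus_eq_zero [IsUltrametricDist K] [CompleteSpace K] {t : K}
    (ht : ‖t‖ ≤ 4⁻¹) (h : padicLogOnePlus t = 0) : t = 0 := by
  have := norm_padicLogOnePlus_sub_self_le hnat ht
  rw [h, zero_sub, norm_neg] at this
  exact norm_le_zero_iff.1 (by linarith [norm_nonneg t])

theorem tendsto_pow_sub_one_div_natCast_padicLogOnePlus [IsUltrametricDist K] [CompleteSpace K]
    {x : K} (hx : ‖x‖ < 1) {ι : Type*} {l : Filter ι} {N : ι → ℕ} (hN0 : ∀ i, N i ≠ 0)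
    (hN : Tendsto (fun i => (N i : K)) l (𝓝 0)) :
    Tendsto (fun i => ((1 + x) ^ N i - 1) / N i) l (𝓝 (padicLogOnePlus x)) := by
  have := charZero_of_forall_inv_le_norm_natCast hnat
  have hterm (k : ℕ) : Tendsto (fun i => ((N i - 1).choose (k - 1) : K) * x ^ k / k) l
      (𝓝 ((-1) ^ (k + 1) * x ^ k / k)) := by
    rcases k with _ | k
    · simpa using tendsto_const_nhds
    · simpa [pow_succ] using ((tendsto_natCast_choose_sub_one hN0 hN k).mul_const
        (x ^ (k + 1))).div_const ((k + 1 : ℕ) : K)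
  simp only [pow_sub_one_div_natCast_eq_tsum _ (hN0 _)]
  exact tendsto_tsum_of_dominated_convergence (summable_natCast_mul_norm_pow hx) hterm
    (.of_forall fun _ k =>
      norm_mul_pow_div_natCast_le hnat (IsUltrametricDist.norm_natCast_le_one K _) x k)

end LogSeries

section UnitDisc

variable {K : Type*} [NormedField K] [IsUltrametricDist K] {a b : K}

theorem norm_eq_one_of_norm_sub_one_lt (ha : ‖a - 1‖ < 1) : ‖a‖ = 1 := by
  rw [← sub_add_cancel a 1,
    IsUltrametricDist.norm_add_eq_max_of_norm_ne_norm (by simpa using ha.ne), norm_one,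
    max_eq_right ha.le]

theorem norm_mul_sub_one_lt (ha : ‖a - 1‖ < 1) (hb : ‖b - 1‖ < 1) : ‖a * b - 1‖ < 1 := by
  rw [show a * b - 1 = a * (b - 1) + (a - 1) by ring]
  refine (IsUltrametricDist.norm_add_le_max _ _).trans_lt (max_lt ?_ ha)
  rwa [norm_mul, norm_eq_one_of_norm_sub_one_lt ha, one_mul]

theorem norm_inv_sub_one_lt (ha : ‖a - 1‖ < 1) : ‖a⁻¹ - 1‖ < 1 := by
  rwa [show a⁻¹ - 1 = -(a - 1) * a⁻¹ by field_simp [ne_zero_of_norm_sub_one_lt ha]; ring,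
    norm_mul, norm_neg, norm_inv, norm_eq_one_of_norm_sub_one_lt ha, inv_one, mul_one]

theorem norm_zpow_sub_one_lt (ha : ‖a - 1‖ < 1) (j : ℤ) : ‖a ^ j - 1‖ < 1 := by
  have ha0 := ne_zero_of_norm_sub_one_lt ha
  induction j using Int.induction_on with
  | zero => simp
  | succ i ih => rw [zpow_add_one₀ ha0]; exact norm_mul_sub_one_lt ih ha
  | pred i ih => rw [zpow_sub_one₀ ha0]; exact norm_mul_sub_one_lt ih (norm_inv_sub_one_lt ha)

end UnitDisc

section LogHom

variable {K : Type*} [NormedField K] [IsUltrametricDist K] [CompleteSpace K]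
  (hnat : ∀ k : ℕ, (k : ℝ)⁻¹ ≤ ‖(k : K)‖) {p : ℕ} (hp0 : p ≠ 0) (hp : ‖(p : K)‖ < 1)
include hnat hp0 hp

theorem tendsto_pow_pow_sub_one_div {a : K} (ha : ‖a - 1‖ < 1) :
    Tendsto (fun n : ℕ => (a ^ p ^ n - 1) / (p : K) ^ n) atTop (𝓝 (padicLogOnePlus (a - 1))) := by
  simpa using tendsto_pow_sub_one_div_natCast_padicLogOnePlus hnat ha (N := fun n => p ^ n)
    (fun n => pow_ne_zero n hp0) (by simpa using tendsto_pow_atTop_nhds_zero_of_norm_lt_one hp)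

theorem tendsto_pow_pow_sub_one {a : K} (ha : ‖a - 1‖ < 1) :
    Tendsto (fun n : ℕ => a ^ p ^ n - 1) atTop (𝓝 0) := by
  have := charZero_of_forall_inv_le_norm_natCast hnat
  have hp0' : (p : K) ≠ 0 := Nat.cast_ne_zero.2 hp0
  simpa [div_mul_cancel₀ _ (pow_ne_zero _ hp0')] using
    (tendsto_pow_pow_sub_one_div hnat hp0 hp ha).mul (tendsto_pow_atTop_nhds_zero_of_norm_lt_one hp)

theorem padicLogOnePlus_mul_sub_one {a b : K} (ha : ‖a - 1‖ < 1) (hb : ‖b - 1‖ < 1) :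
    padicLogOnePlus (a * b - 1) = padicLogOnePlus (a - 1) + padicLogOnePlus (b - 1) := by
  have hA := tendsto_pow_pow_sub_one_div hnat hp0 hp ha
  have hsum := (hA.add (tendsto_pow_pow_sub_one_div hnat hp0 hp hb)).add
    (hA.mul (tendsto_pow_pow_sub_one hnat hp0 hp hb))
  rw [mul_zero, add_zero] at hsum
  refine tendsto_nhds_unique (tendsto_pow_pow_sub_one_div hnat hp0 hp (norm_mul_sub_one_lt ha hb))
    (hsum.congr fun n => ?_)
  rw [mul_pow]
  ring

theorem padicLogOnePlus_zpow_sub_one {a : K} (ha : ‖a - 1‖ < 1) (j : ℤ) :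
    padicLogOnePlus (a ^ j - 1) = j * padicLogOnePlus (a - 1) := by
  have ha0 := ne_zero_of_norm_sub_one_lt ha
  induction j using Int.induction_on with
  | zero => simp [padicLogOnePlus_zero]
  | succ i ih =>
    rw [zpow_add_one₀ ha0,
      padicLogOnePlus_mul_sub_one hnat hp0 hp (norm_zpow_sub_one_lt ha _) ha, ih]
    push_cast
    ring
  | pred i ih =>
    have := padicLogOnePlus_mul_sub_one hnat hp0 hp (norm_zpow_sub_one_lt ha (-i - 1)) ha
    rw [← zpow_add_one₀ ha0, sub_add_cancel, ih] at this
    push_cast at this ⊢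
    linear_combination -this

theorem padicLogOnePlus_sub_one_eq_zero_iff {a : K} (ha : ‖a - 1‖ < 1) :
    padicLogOnePlus (a - 1) = 0 ↔ ∃ n : ℕ, a ^ p ^ n = 1 := by
  have := charZero_of_forall_inv_le_norm_natCast hnat
  have hpow (n : ℕ) : padicLogOnePlus (a ^ p ^ n - 1) = (p : K) ^ n * padicLogOnePlus (a - 1) := by
    have := padicLogOnePlus_zpow_sub_one hnat hp0 hp ha (p ^ n : ℕ)
    rwa [zpow_natCast, Int.cast_natCast, Nat.cast_pow] at this
  constructor
  · intro h
    obtain ⟨n, hn⟩ := ((tendsto_pow_pow_sub_one hnat hp0 hp ha).eventually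
      (Metric.closedBall_mem_nhds 0 (by norm_num : (0 : ℝ) < 4⁻¹))).exists
    refine ⟨n, sub_eq_zero.1 (eq_zero_of_padicLogOnePlus_eq_zero hnat (by simpa using hn) ?_)⟩
    rw [hpow, h, mul_zero]
  · rintro ⟨n, hn⟩
    have := hpow n
    rw [hn, sub_self, padicLogOnePlus_zero, eq_comm, mul_eq_zero] at this
    exact this.resolve_left (pow_ne_zero n (Nat.cast_ne_zero.2 hp0))

end LogHom

/-- Let `p` be a prime and `K` a complete nonarchimedean field extending
`ℚ_p`. Let `u` (an element of `ℤ_p`, viewed in `K`) satisfy `‖u - 1‖ ≤ p⁻¹` and let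
`j ∈ ℤ`. For `x ∈ K` with `‖x‖ < 1`, one has `log(1+x) = j·log(u)` (where `log u` means
`log(1 + (u-1))`) if and only if there exist `n ≥ 0` and `ζ ∈ K` with `ζ^{p^n} = 1` and
`1 + x = u^j ζ`: the zeros of `ℓ_j = log(1+x)/log u - j` in the open unit disk are exactly
the points `u^j ζ - 1` with `ζ` a root of unity of `p`-power order. -/
theorem stmt_5 (p : ℕ) [Fact p.Prime] (K : Type*) [NormedField K] [CompleteSpace K]
    [IsUltrametricDist K] (hK : ∀ q : ℚ, ‖(q : K)‖ = ‖(q : ℚ_[p])‖)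
    (u : K) (hu : ‖u - 1‖ ≤ (p : ℝ)⁻¹) (j : ℤ)
    (x : K) (hx : ‖x‖ < 1) :
    padicLogOnePlus x = (j : K) * padicLogOnePlus (u - 1) ↔
      ∃ (n : ℕ) (ζ : K), ζ ^ (p ^ n) = 1 ∧ 1 + x = u ^ j * ζ := by
  have hp : p.Prime := Fact.out
  have hKnat (k : ℕ) : ‖(k : K)‖ = ‖(k : ℚ_[p])‖ := by exact_mod_cast hK k
  have hnat (k : ℕ) : (k : ℝ)⁻¹ ≤ ‖(k : K)‖ := hKnat k ▸ Padic.inv_le_norm_natCast p k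
  have hpK : ‖(p : K)‖ < 1 := hKnat p ▸ Padic.norm_p_lt_one
  have hu1 : ‖u - 1‖ < 1 := hu.trans_lt (inv_lt_one_of_one_lt₀ (by exact_mod_cast hp.one_lt))
  have huj : ‖u ^ j - 1‖ < 1 := norm_zpow_sub_one_lt hu1 j
  have huj0 : u ^ j ≠ 0 := ne_zero_of_norm_sub_one_lt huj
  set ζ := (u ^ j)⁻¹ * (1 + x) with hζdef
  have hζ : ‖ζ - 1‖ < 1 := norm_mul_sub_one_lt (norm_inv_sub_one_lt huj) (by simpa using hx)
  have hlog : padicLogOnePlus x = j * padicLogOnePlus (u - 1) + padicLogOnePlus (ζ - 1) := by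
    rw [← padicLogOnePlus_zpow_sub_one hnat hp.ne_zero hpK hu1,
      ← padicLogOnePlus_mul_sub_one hnat hp.ne_zero hpK huj hζ, mul_inv_cancel_left₀ huj0,
      add_sub_cancel_left]
  rw [hlog, add_eq_left, padicLogOnePlus_sub_one_eq_zero_iff hnat hp.ne_zero hpK hζ]
  constructor
  · rintro ⟨n, hn⟩
    exact ⟨n, ζ, hn, (mul_inv_cancel_left₀ huj0 _).symm⟩
  · rintro ⟨n, ξ, hξ, hxξ⟩
    rw [hζdef, hxξ, inv_mul_cancel_left₀ huj0]
    exact ⟨n, hξ⟩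
end

section
/- Let p be an odd prime, ζ a primitive p-th root of unity in an algebraic closure of ℚ_p, and 𝒪 = ℤ_p[ζ] the ring of integers of ℚ_p(ζ). For every power series f ∈ ℤ_p[[X]] there exists a unique power series g ∈ ℤ_p[[X]] such that, in 𝒪[[X]], Σ_{i=0}^{p-1} f(ζ^i(1+X) − 1) = p · g((1+X)^p − 1). (Here f(ζ^i(1+X) − 1) denotes the substitution of ζ^i(1+X) − 1 into f, which is well defined since the constant term ζ^i − 1 is topologically nilpotent in 𝒪 and 𝒪[[X]] is complete.) -/
/-!
Write `X ^ j = ((1 + X) - 1) ^ j` and use `∑ᵢ ζ ^ (i * s) = p · [p ∣ s]`: this gives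
`∑ᵢ (ζⁱ(1 + X) - 1) ^ j = p · ψⱼ((1 + X) ^ p - 1)` for the integral polynomial
`ψⱼ = ∑_{p ∣ s} (-1) ^ (j - s) C(j, s) (1 + X) ^ (s / p)`, so `g = ∑ⱼ fⱼ ψⱼ` is the solution.
The coefficients of `((1 + X) ^ p - 1) ^ n` form a triangular matrix with diagonal `pⁿ`; this
gives uniqueness and, read in `K`, the bound `‖[Xⁿ] ψⱼ‖ ≤ ‖p‖^-(n+1)² ‖ζ - 1‖^(j - n)`.
As `‖ζ - 1‖ ^ (p - 1) = ‖p‖ < 1`, the coefficients of `ψⱼ` tend to `0` and `∑ⱼ fⱼ ψⱼ` converges.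
-/

open Finset Polynomial Filter

namespace PsiOperator

theorem _root_.IsPrimitiveRoot.geom_sum_pow_eq {R : Type*} [CommRing R] [IsDomain R] {ζ : R}
    {k : ℕ} (hζ : IsPrimitiveRoot ζ k) (s : ℕ) :
    ∑ i ∈ range k, (ζ ^ s) ^ i = if k ∣ s then (k : R) else 0 := by
  split_ifs with hks
  · simp [(hζ.pow_eq_one_iff_dvd s).mpr hks]
  · have hne : ζ ^ s - 1 ≠ 0 := sub_ne_zero.mpr fun h => hks ((hζ.pow_eq_one_iff_dvd s).mp h)
    refine eq_zero_of_ne_zero_of_mul_right_eq_zero hne ?_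
    rw [geom_sum_mul, ← pow_mul, mul_comm, pow_mul, hζ.pow_eq_one, one_pow, sub_self]

section Coefficients

variable {R : Type*} [CommRing R]

theorem coeff_C_mul_one_add_X_sub_one_pow (a : R) (k m : ℕ) :
    ((C a * (1 + X) - 1) ^ k).coeff m = k.choose m * a ^ m * (a - 1) ^ (k - m) := by
  have : C a * (1 + X) - 1 = (X + C (a - 1)).comp (C a * X) := by
    rw [add_comp, X_comp, C_comp, C_sub, C_1]; ring
  rw [this, ← pow_comp, comp_C_mul_X_coeff, coeff_X_add_C_pow]
  ring

theorem coeff_pow_eq_zero_of_lt {ω : R[X]} (hω : X ∣ ω) {m n : ℕ} (hmn : m < n) :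
    (ω ^ n).coeff m = 0 :=
  (X_pow_dvd_iff.mp (pow_dvd_pow_of_dvd hω n)) m hmn

theorem coeff_pow_self {ω : R[X]} (hω : X ∣ ω) (n : ℕ) : (ω ^ n).coeff n = ω.coeff 1 ^ n := by
  obtain ⟨u, rfl⟩ := hω
  rw [mul_pow, coeff_X_pow_mul', if_pos le_rfl, Nat.sub_self, coeff_zero_eq_eval_zero,
    eval_pow, ← coeff_zero_eq_eval_zero, coeff_X_mul]

theorem coeff_comp_eq_sum {ω : R[X]} (hω : X ∣ ω) (q : R[X]) (m : ℕ) :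
    (q.comp ω).coeff m = ∑ n ∈ range (m + 1), q.coeff n * (ω ^ n).coeff m := by
  rw [comp, eval₂_eq_sum_range' C (n := q.natDegree + m + 1) (by omega), finsetSum_coeff]
  simp only [coeff_C_mul]
  refine (sum_subset (range_subset_range.mpr (by omega)) fun n _ hn => ?_).symm
  rw [mem_range, not_lt] at hn
  rw [coeff_pow_eq_zero_of_lt hω (by omega), mul_zero]

end Coefficients

/-- `ψ(X ^ j)`: expand `X ^ j = ((1 + X) - 1) ^ j` and use that `ψ((1 + X) ^ s)` is
`(1 + X) ^ (s / p)` when `p ∣ s` and `0` otherwise. -/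
noncomputable def psiPoly (p j : ℕ) : ℤ[X] :=
  ∑ s ∈ range (j + 1) with p ∣ s, C ((-1) ^ (j - s) * (j.choose s : ℤ)) * (1 + X) ^ (s / p)

theorem psiPoly_comp (p j : ℕ) :
    (psiPoly p j).comp ((1 + X) ^ p - 1)
      = ∑ s ∈ range (j + 1) with p ∣ s, C ((-1) ^ (j - s) * (j.choose s : ℤ)) * (1 + X) ^ s := by
  simp only [psiPoly, Polynomial.sum_comp, mul_comp, C_comp, pow_comp, add_comp, one_comp, X_comp,
    add_sub_cancel]
  refine sum_congr rfl fun s hs => ?_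
  rw [← pow_mul, Nat.mul_div_cancel' (mem_filter.mp hs).2]

theorem _root_.IsPrimitiveRoot.sum_C_pow_mul_one_add_X_sub_one_pow {R : Type*} [CommRing R]
    [IsDomain R] {ζ : R} {p : ℕ} (hζ : IsPrimitiveRoot ζ p) (j : ℕ) :
    ∑ i ∈ range p, (C (ζ ^ i) * (1 + X) - 1) ^ j
      = C (p : R) * ((psiPoly p j).comp ((1 + X) ^ p - 1)).map (Int.castRingHom R) := by
  have hexpand : ∀ i, (C (ζ ^ i) * (1 + X) - 1) ^ j = ∑ s ∈ range (j + 1),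
      C ((ζ ^ s) ^ i) * ((-1) ^ (j - s) * (j.choose s : R[X]) * (1 + X) ^ s) := by
    intro i
    rw [sub_eq_add_neg, add_pow]
    refine sum_congr rfl fun s _ => ?_
    rw [mul_pow, ← C_pow, ← pow_mul, ← pow_mul, mul_comm i s]
    ring
  simp only [hexpand]
  rw [sum_comm, psiPoly_comp, sum_filter, Polynomial.map_sum, mul_sum]
  refine sum_congr rfl fun s _ => ?_
  rw [← sum_mul, ← map_sum, hζ.geom_sum_pow_eq]
  split_ifs <;> simp

theorem X_dvd_one_add_X_pow_sub_one (p : ℕ) : (X : ℤ[X]) ∣ (1 + X) ^ p - 1 :=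
  X_dvd_iff.mpr (by simp [coeff_one_add_X_pow])

theorem coeff_one_add_X_pow_sub_one_pow_self (p n : ℕ) :
    (((1 + X : ℤ[X]) ^ p - 1) ^ n).coeff n = (p : ℤ) ^ n := by
  rw [coeff_pow_self (X_dvd_one_add_X_pow_sub_one p)]
  simp [coeff_one_add_X_pow, coeff_one]

theorem _root_.IsPrimitiveRoot.sum_choose_mul_pow_eq {R : Type*} [CommRing R] [IsDomain R]
    {ζ : R} {p : ℕ} (hζ : IsPrimitiveRoot ζ p) (k m : ℕ) :
    ∑ i ∈ range p, (k.choose m : R) * ζ ^ (i * m) * (ζ ^ i - 1) ^ (k - m)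
      = p * ∑ n ∈ range (m + 1),
          ((psiPoly p k).coeff n : R) * ((((1 + X : ℤ[X]) ^ p - 1) ^ n).coeff m : R) := by
  have h := congrArg (coeff · m) (hζ.sum_C_pow_mul_one_add_X_sub_one_pow k)
  simp only [finsetSum_coeff, coeff_C_mul_one_add_X_sub_one_pow, coeff_C_mul, coeff_map,
    coeff_comp_eq_sum (X_dvd_one_add_X_pow_sub_one p), ← pow_mul, eq_intCast] at h
  exact_mod_cast h

section Ultrametric

variable {K : Type*} [NormedField K] [IsUltrametricDist K]

theorem norm_pow_sub_one_le {x : K} (hx : ‖x‖ ≤ 1) (n : ℕ) : ‖x ^ n - 1‖ ≤ ‖x - 1‖ := by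
  rw [← geom_sum_mul, norm_mul]
  refine mul_le_of_le_one_left (norm_nonneg _) ?_
  refine IsUltrametricDist.norm_sum_le_of_forall_le_of_nonneg zero_le_one fun i _ => ?_
  rw [norm_pow]
  exact pow_le_one₀ (norm_nonneg _) hx

variable {p : ℕ} {ζ : K}

theorem _root_.IsPrimitiveRoot.norm_sub_one_le_one (hζ : IsPrimitiveRoot ζ p) (hp : p ≠ 0) :
    ‖ζ - 1‖ ≤ 1 := by
  simpa [← sub_eq_add_neg, (hζ.isOfFinOrder hp).norm_eq_one] using
    IsUltrametricDist.norm_add_le_max ζ (-1)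

theorem _root_.IsPrimitiveRoot.norm_sub_one_pow_eq (hζ : IsPrimitiveRoot ζ p) (hp : p.Prime) :
    ‖ζ - 1‖ ^ (p - 1) = ‖(p : K)‖ := by
  have hpow : ∀ {ξ : K}, IsPrimitiveRoot ξ p → ∀ n, ‖ξ ^ n - 1‖ ≤ ‖ξ - 1‖ := fun hξ =>
    norm_pow_sub_one_le (hξ.isOfFinOrder hp.ne_zero).norm_eq_one.le
  have hfactor : ∀ k ∈ range (p - 1), ‖1 - ζ ^ (k + 1)‖ = ‖ζ - 1‖ := by
    intro k hk
    have hcop : (k + 1).Coprime p :=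
      (Nat.coprime_of_lt_prime k.succ_ne_zero (by simp at hk; omega) hp).symm
    have hprim := hζ.pow_of_coprime (k + 1) hcop
    have : NeZero p := ⟨hp.ne_zero⟩
    obtain ⟨b, -, hb⟩ := hprim.eq_pow_of_pow_eq_one hζ.pow_eq_one
    rw [norm_sub_rev]
    refine le_antisymm (hpow hζ _) ?_
    calc ‖ζ - 1‖ = ‖(ζ ^ (k + 1)) ^ b - 1‖ := by rw [hb]
      _ ≤ ‖ζ ^ (k + 1) - 1‖ := hpow hprim b
  have hprod := (Nat.sub_add_cancel hp.one_le ▸ hζ :).prod_one_sub_pow_eq_order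
  rw [← Nat.cast_add_one, Nat.sub_add_cancel hp.one_le] at hprod
  rw [← hprod, norm_prod, prod_congr rfl hfactor, prod_const, card_range]

theorem _root_.IsPrimitiveRoot.norm_choose_mul_pow_mul_pow_le (hζ : IsPrimitiveRoot ζ p)
    (hp : p ≠ 0) (i k n : ℕ) :
    ‖(k.choose n : K) * ζ ^ (i * n) * (ζ ^ i - 1) ^ (k - n)‖ ≤ ‖ζ - 1‖ ^ (k - n) := by
  have hζ1 := (hζ.isOfFinOrder hp).norm_eq_one
  rw [norm_mul, norm_mul, norm_pow, norm_pow, hζ1, one_pow, mul_one]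
  exact (mul_le_of_le_one_left (by positivity) (IsUltrametricDist.norm_natCast_le_one K _)).trans
    (pow_le_pow_left₀ (norm_nonneg _) (norm_pow_sub_one_le hζ1.le i) _)

/-- In `sum_choose_mul_pow_eq` at `(k, n)` the diagonal term is `pⁿ⁺¹ aₙ`, so `aₙ` is controlled
by the left-hand side and the lower coefficients `aₗ`. -/
theorem norm_coeff_psiPoly_mul_norm_pow_le (hζ : IsPrimitiveRoot ζ p) (hp : p ≠ 0) {k n : ℕ}
    {B : ℝ} (hB : ‖ζ - 1‖ ^ (k - n) ≤ B)
    (hlower : ∀ l < n, ‖((psiPoly p k).coeff l : K)‖ ≤ B) :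
    ‖((psiPoly p k).coeff n : K)‖ * ‖(p : K)‖ ^ (n + 1) ≤ B := by
  have hB0 : 0 ≤ B := (pow_nonneg (norm_nonneg _) _).trans hB
  have hrec := hζ.sum_choose_mul_pow_eq k n
  rw [sum_range_succ, coeff_one_add_X_pow_sub_one_pow_self] at hrec
  set D := ∑ i ∈ range p, (k.choose n : K) * ζ ^ (i * n) * (ζ ^ i - 1) ^ (k - n)
  set S := ∑ l ∈ range n, ((psiPoly p k).coeff l : K) *
      (((((1 + X : ℤ[X]) ^ p - 1) ^ l).coeff n : ℤ) : K)
  have hsolve : ((psiPoly p k).coeff n : K) * p ^ (n + 1) = D + -(p * S) := by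
    push_cast at hrec
    linear_combination -hrec
  rw [← norm_pow, ← norm_mul, hsolve]
  refine (IsUltrametricDist.norm_add_le_max _ _).trans (max_le ?_ ?_)
  · exact IsUltrametricDist.norm_sum_le_of_forall_le_of_nonneg hB0 fun i _ =>
      (hζ.norm_choose_mul_pow_mul_pow_le hp i k n).trans hB
  · rw [norm_neg, norm_mul]
    refine (mul_le_of_le_one_left (norm_nonneg _) (IsUltrametricDist.norm_natCast_le_one K p)).trans
      (IsUltrametricDist.norm_sum_le_of_forall_le_of_nonneg hB0 fun l hl => ?_)
    rw [norm_mul]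
    exact (mul_le_of_le_one_right (norm_nonneg _) (IsUltrametricDist.norm_intCast_le_one K _)).trans
      (hlower l (mem_range.mp hl))

theorem norm_coeff_psiPoly_le (hζ : IsPrimitiveRoot ζ p) (hp : (p : K) ≠ 0) (k n : ℕ) :
    ‖((psiPoly p k).coeff n : K)‖ ≤ ‖(p : K)‖⁻¹ ^ (n + 1) ^ 2 * ‖ζ - 1‖ ^ (k - n) := by
  set M := ‖(p : K)‖⁻¹
  set r := ‖ζ - 1‖
  have hp0 : p ≠ 0 := by rintro rfl; simp at hp
  have hM : 1 ≤ M :=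
    (one_le_inv₀ (norm_pos_iff.mpr hp)).mpr (IsUltrametricDist.norm_natCast_le_one K p)
  have hr : r ≤ 1 := hζ.norm_sub_one_le_one hp0
  induction n using Nat.strong_induction_on with
  | _ n ih =>
  have hstep := norm_coeff_psiPoly_mul_norm_pow_le hζ hp0 (B := M ^ n ^ 2 * r ^ (k - n))
    (le_mul_of_one_le_left (by positivity) (one_le_pow₀ hM)) fun l hl =>
      (ih l hl).trans (mul_le_mul (pow_le_pow_right₀ hM (Nat.pow_le_pow_left hl 2))
        (pow_le_pow_of_le_one (norm_nonneg _) hr (by omega)) (by positivity) (by positivity))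
  calc ‖((psiPoly p k).coeff n : K)‖
      = ‖((psiPoly p k).coeff n : K)‖ * ‖(p : K)‖ ^ (n + 1) * M ^ (n + 1) := by
        rw [mul_assoc, ← mul_pow, mul_inv_cancel₀ (norm_ne_zero_iff.mpr hp), one_pow, mul_one]
    _ ≤ M ^ n ^ 2 * r ^ (k - n) * M ^ (n + 1) := by gcongr
    _ = M ^ (n ^ 2 + n + 1) * r ^ (k - n) := by ring
    _ ≤ M ^ (n + 1) ^ 2 * r ^ (k - n) :=
        mul_le_mul_of_nonneg_right (pow_le_pow_right₀ hM (by nlinarith)) (by positivity)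

end Ultrametric

theorem summable_of_norm_le_mul_pow_sub {E : Type*} [NormedAddCommGroup E] [IsUltrametricDist E]
    [CompleteSpace E] {u : ℕ → E} {C r : ℝ} (hr0 : 0 ≤ r) (hr1 : r < 1) (m : ℕ)
    (h : ∀ k, ‖u k‖ ≤ C * r ^ (k - m)) : Summable u := by
  apply NonarchimedeanAddGroup.summable_of_tendsto_cofinite_zero
  rw [Nat.cofinite_eq_atTop]
  refine squeeze_zero_norm h ?_
  simpa using
    ((tendsto_pow_atTop_nhds_zero_of_lt_one hr0 hr1).comp (tendsto_sub_atTop_nat m)).const_mul C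

theorem eq_of_forall_sum_range_succ_mul_eq {R : Type*} [Ring R] [NoZeroDivisors R]
    {a b : ℕ → R} {c : ℕ → ℕ → R} (hc : ∀ m, c m m ≠ 0)
    (h : ∀ m, ∑ k ∈ range (m + 1), a k * c m k = ∑ k ∈ range (m + 1), b k * c m k) : a = b := by
  funext m
  induction m using Nat.strong_induction_on with
  | _ m ih =>
    have hm := h m
    rw [sum_range_succ, sum_range_succ, sum_congr rfl fun k hk => by rw [ih k (mem_range.mp hk)],
      add_right_inj] at hm
    exact mul_right_cancel₀ (hc m) hm

/-- `ψ(f) = ∑ₖ fₖ ψ(Xᵏ)` coefficientwise; these sums converge by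
`summable_coeff_mul_coeff_psiPoly`. -/
noncomputable def psi (p : ℕ) [Fact p.Prime] (f : PowerSeries ℤ_[p]) : PowerSeries ℤ_[p] :=
  PowerSeries.mk fun n => ∑' k, PowerSeries.coeff k f * ((psiPoly p k).coeff n : ℤ_[p])

section Padic

variable {p : ℕ} [Fact p.Prime]

section Field

variable {K : Type*} [Field K] [Algebra ℚ_[p] K]

theorem natCast_ne_zero_of_padic : (p : K) ≠ 0 := by
  rw [← map_natCast (algebraMap ℚ_[p] K)]
  exact (_root_.map_ne_zero _).mpr (Nat.cast_ne_zero.mpr (Fact.out : p.Prime).ne_zero)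

theorem eq_of_forall_mul_sum_coeff_eq {g g' : PowerSeries ℤ_[p]}
    (h : ∀ m : ℕ, (p : K) * ∑ n ∈ range (m + 1),
        algebraMap ℚ_[p] K ((PowerSeries.coeff n g : ℤ_[p]) : ℚ_[p]) *
          (((((1 + X : ℤ[X]) ^ p - 1) ^ n).coeff m : ℤ) : K)
      = (p : K) * ∑ n ∈ range (m + 1),
        algebraMap ℚ_[p] K ((PowerSeries.coeff n g' : ℤ_[p]) : ℚ_[p]) *
          (((((1 + X : ℤ[X]) ^ p - 1) ^ n).coeff m : ℤ) : K)) :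
    g = g' := by
  have hp : (p : K) ≠ 0 := natCast_ne_zero_of_padic
  have hinj : Function.Injective fun x : ℤ_[p] => algebraMap ℚ_[p] K x :=
    (algebraMap ℚ_[p] K).injective.comp Subtype.val_injective
  have hdiag : ∀ m, (((((1 + X : ℤ[X]) ^ p - 1) ^ m).coeff m : ℤ) : K) ≠ 0 := fun m => by
    rw [coeff_one_add_X_pow_sub_one_pow_self]
    push_cast
    exact pow_ne_zero _ hp
  ext n
  exact hinj (congrFun (eq_of_forall_sum_range_succ_mul_eq hdiag
    fun m => mul_left_cancel₀ hp (h m)) n)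

end Field

variable {K : Type*} [NormedField K] [Algebra ℚ_[p] K]

theorem norm_algebraMap_padicInt (hK : ∀ q : ℚ_[p], ‖algebraMap ℚ_[p] K q‖ = ‖q‖) (x : ℤ_[p]) :
    ‖algebraMap ℚ_[p] K x‖ = ‖x‖ := by
  rw [hK, PadicInt.norm_def]

variable [IsUltrametricDist K] {ζ : K}

theorem norm_sub_one_lt_one (hK : ∀ q : ℚ_[p], ‖algebraMap ℚ_[p] K q‖ = ‖q‖)
    (hζ : IsPrimitiveRoot ζ p) : ‖ζ - 1‖ < 1 := by
  have hp : p.Prime := Fact.out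
  rw [← pow_lt_one_iff_of_nonneg (norm_nonneg _) (Nat.sub_ne_zero_of_lt hp.one_lt),
    hζ.norm_sub_one_pow_eq hp, ← map_natCast (algebraMap ℚ_[p] K), hK, Padic.norm_p]
  exact inv_lt_one_of_one_lt₀ (by exact_mod_cast hp.one_lt)

theorem summable_coeff_mul_coeff_psiPoly (hK : ∀ q : ℚ_[p], ‖algebraMap ℚ_[p] K q‖ = ‖q‖)
    (hζ : IsPrimitiveRoot ζ p) (f : PowerSeries ℤ_[p]) (n : ℕ) :
    Summable fun k => PowerSeries.coeff k f * ((psiPoly p k).coeff n : ℤ_[p]) := by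
  refine summable_of_norm_le_mul_pow_sub (C := ‖(p : K)‖⁻¹ ^ (n + 1) ^ 2) (norm_nonneg _)
    (norm_sub_one_lt_one hK hζ) n fun k => ?_
  rw [norm_mul]
  refine (mul_le_of_le_one_left (norm_nonneg _) (PadicInt.norm_le_one _)).trans ?_
  rw [← norm_algebraMap_padicInt hK, PadicInt.coe_intCast, map_intCast]
  exact norm_coeff_psiPoly_le hζ natCast_ne_zero_of_padic k n

theorem summable_coeff_mul_choose_mul_pow [CompleteSpace K]
    (hK : ∀ q : ℚ_[p], ‖algebraMap ℚ_[p] K q‖ = ‖q‖) (hζ : IsPrimitiveRoot ζ p)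
    (f : PowerSeries ℤ_[p]) (i m : ℕ) :
    Summable fun k : ℕ => algebraMap ℚ_[p] K ((PowerSeries.coeff k f : ℤ_[p]) : ℚ_[p]) *
      (k.choose m : K) * ζ ^ (i * m) * (ζ ^ i - 1) ^ (k - m) := by
  refine summable_of_norm_le_mul_pow_sub (C := 1) (norm_nonneg _) (norm_sub_one_lt_one hK hζ) m
    fun k => ?_
  rw [mul_assoc, mul_assoc, norm_mul, ← mul_assoc]
  exact mul_le_mul ((norm_algebraMap_padicInt hK _).trans_le (PadicInt.norm_le_one _))
    (hζ.norm_choose_mul_pow_mul_pow_le (Fact.out : p.Prime).ne_zero i k m) (norm_nonneg _)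
    zero_le_one

theorem sum_tsum_eq_mul_sum_coeff_psi [CompleteSpace K]
    (hK : ∀ q : ℚ_[p], ‖algebraMap ℚ_[p] K q‖ = ‖q‖) (hζ : IsPrimitiveRoot ζ p)
    (f : PowerSeries ℤ_[p]) (m : ℕ) :
    ∑ i ∈ range p, ∑' k : ℕ, algebraMap ℚ_[p] K ((PowerSeries.coeff k f : ℤ_[p]) : ℚ_[p]) *
        (k.choose m : K) * ζ ^ (i * m) * (ζ ^ i - 1) ^ (k - m)
      = (p : K) * ∑ n ∈ range (m + 1),
          algebraMap ℚ_[p] K ((PowerSeries.coeff n (psi p f) : ℤ_[p]) : ℚ_[p]) *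
            (((((1 + X : ℤ[X]) ^ p - 1) ^ n).coeff m : ℤ) : K) := by
  let ι : ℤ_[p] →+* K := (algebraMap ℚ_[p] K).comp PadicInt.Coe.ringHom
  have hι_apply : ∀ x, ι x = algebraMap ℚ_[p] K x := fun _ => rfl
  have hι : Continuous ι :=
    (AddMonoidHomClass.isometry_of_norm ι (norm_algebraMap_padicInt hK)).continuous
  have hsum_n : ∀ n ∈ range (m + 1), Summable fun k : ℕ =>
      ((p : K) * (((((1 + X : ℤ[X]) ^ p - 1) ^ n).coeff m : ℤ) : K)) *
        ι (PowerSeries.coeff k f * ((psiPoly p k).coeff n : ℤ_[p])) := fun n _ =>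
    ((summable_coeff_mul_coeff_psiPoly hK hζ f n).map ι hι).mul_left _
  have hcoeff : ∀ n, algebraMap ℚ_[p] K ((PowerSeries.coeff n (psi p f) : ℤ_[p]) : ℚ_[p])
      = ∑' k, ι (PowerSeries.coeff k f * ((psiPoly p k).coeff n : ℤ_[p])) := fun n => by
    rw [psi, PowerSeries.coeff_mk]
    exact (summable_coeff_mul_coeff_psiPoly hK hζ f n).map_tsum ι hι
  have hk : ∀ k : ℕ, ∑ i ∈ range p,
      algebraMap ℚ_[p] K ((PowerSeries.coeff k f : ℤ_[p]) : ℚ_[p]) * (k.choose m : K) *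
        ζ ^ (i * m) * (ζ ^ i - 1) ^ (k - m)
        = ∑ n ∈ range (m + 1), ((p : K) * (((((1 + X : ℤ[X]) ^ p - 1) ^ n).coeff m : ℤ) : K)) *
            ι (PowerSeries.coeff k f * ((psiPoly p k).coeff n : ℤ_[p])) := fun k => by
    calc _ = algebraMap ℚ_[p] K ((PowerSeries.coeff k f : ℤ_[p]) : ℚ_[p]) *
          ∑ i ∈ range p, (k.choose m : K) * ζ ^ (i * m) * (ζ ^ i - 1) ^ (k - m) := by
          rw [mul_sum]
          exact sum_congr rfl fun _ _ => by ring
      _ = _ := by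
          rw [hζ.sum_choose_mul_pow_eq, mul_sum, mul_sum]
          refine sum_congr rfl fun n _ => ?_
          rw [map_mul, map_intCast, hι_apply]
          ring
  rw [← Summable.tsum_finsetSum fun i _ => summable_coeff_mul_choose_mul_pow hK hζ f i m,
    tsum_congr hk, Summable.tsum_finsetSum hsum_n, mul_sum]
  refine sum_congr rfl fun n _ => ?_
  rw [tsum_mul_left, hcoeff]
  ring

end Padic
end PsiOperator

open PsiOperator in
theorem stmt_10_general (p : ℕ) [Fact p.Prime]
    (K : Type*) [NormedField K] [CompleteSpace K] [IsUltrametricDist K]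
    [Algebra ℚ_[p] K] (hK : ∀ q : ℚ_[p], ‖algebraMap ℚ_[p] K q‖ = ‖q‖)
    (ζ : K) (hζ : IsPrimitiveRoot ζ p)
    (f : PowerSeries ℤ_[p]) :
    ∃! g : PowerSeries ℤ_[p], ∀ m : ℕ,
      (∑ i ∈ Finset.range p, ∑' k : ℕ,
          algebraMap ℚ_[p] K ((PowerSeries.coeff k f : ℤ_[p]) : ℚ_[p]) *
            (k.choose m : K) * ζ ^ (i * m) * (ζ ^ i - 1) ^ (k - m))
        = (p : K) * ∑ k ∈ Finset.range (m + 1),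
            algebraMap ℚ_[p] K ((PowerSeries.coeff k g : ℤ_[p]) : ℚ_[p]) *
              (((((1 + Polynomial.X : Polynomial ℤ) ^ p - 1) ^ k).coeff m : ℤ) : K) :=
  ⟨psi p f, sum_tsum_eq_mul_sum_coeff_psi hK hζ f, fun _ hg => eq_of_forall_mul_sum_coeff_eq
    fun m => (hg m).symm.trans (sum_tsum_eq_mul_sum_coeff_psi hK hζ f m)⟩

/-- Let `p` be an odd prime, `ζ` a primitive `p`-th root of unity in an
algebraic closure of `ℚ_p` (formalized: in a complete nonarchimedean normed field `K`
whose norm extends that of `ℚ_p`), and `𝒪 = ℤ_p[ζ]`. For every `f ∈ ℤ_p[[X]]` there is a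
unique `g ∈ ℤ_p[[X]]` such that `Σ_{i=0}^{p-1} f(ζ^i(1+X) - 1) = p · g((1+X)^p - 1)`.
Since `ζ^i(1+X) - 1 = (ζ^i - 1) + ζ^i X` with `ζ^i - 1` topologically nilpotent, the
coefficient of `X^m` in `f(ζ^i(1+X) - 1)` is the convergent series
`Σ_k f_k · C(k,m) · ζ^{im} (ζ^i - 1)^{k-m}`, and the identity is stated coefficientwise;
the coefficient of `X^m` in `g((1+X)^p - 1)` is the finite sum
`Σ_{k ≤ m} g_k · [X^m](((1+X)^p - 1)^k)`. -/
theorem stmt_10 (p : ℕ) [Fact p.Prime] (hodd : Odd p)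
    (K : Type*) [NormedField K] [CompleteSpace K] [IsUltrametricDist K]
    [Algebra ℚ_[p] K] (hK : ∀ q : ℚ_[p], ‖algebraMap ℚ_[p] K q‖ = ‖q‖)
    (ζ : K) (hζ : IsPrimitiveRoot ζ p)
    (f : PowerSeries ℤ_[p]) :
    ∃! g : PowerSeries ℤ_[p], ∀ m : ℕ,
      (∑ i ∈ Finset.range p, ∑' k : ℕ,
          algebraMap ℚ_[p] K ((PowerSeries.coeff k f : ℤ_[p]) : ℚ_[p]) *
            (k.choose m : K) * ζ ^ (i * m) * (ζ ^ i - 1) ^ (k - m))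
        = (p : K) * ∑ k ∈ Finset.range (m + 1),
            algebraMap ℚ_[p] K ((PowerSeries.coeff k g : ℤ_[p]) : ℚ_[p]) *
              (((((1 + Polynomial.X : Polynomial ℤ) ^ p - 1) ^ k).coeff m : ℤ) : K) :=
  stmt_10_general p K hK ζ hζ f
end

section
/- Let R be a unique factorization domain, let ℓ_1, …, ℓ_m be pairwise non-associated prime elements of R, and let d ≥ 1 and f_1, …, f_d ∈ R be nonzero elements with f_d ∣ f_{d-1} ∣ ⋯ ∣ f_1 and f_1 ∣ ℓ_1 ⋯ ℓ_m. Suppose there exist natural numbers n_1, …, n_m such that ∏_{s=1}^d f_s is associated to ∏_{j=1}^m ℓ_j^{n_j}. Then for each s with 1 ≤ s ≤ d, f_s is associated to ∏_{j : n_j ≥ s} ℓ_j. -/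
/-!
Each `f s` divides the squarefree product `∏ ℓ j`, so it is associated to the product of
the `ℓ j` dividing it. As the `f s` form a divisibility chain, `ℓ j` divides exactly the first
`c j` of them, where `c j` is the number of `s` with `ℓ j ∣ f s`. Hence `∏ f s ∼ ∏ ℓ j ^ c j`,
and comparing with `∏ ℓ j ^ n j` prime by prime gives `c = n`.
-/

open Finset

section PairwiseNonassociatedPrimes

variable {M : Type*} [CommMonoidWithZero M] [IsCancelMulZero M]

theorem Prime.dvd_of_dvd_mul_left_of_not_dvd {p x y : M} (hp : Prime p) (hpx : ¬p ∣ x)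
    (h : x ∣ p * y) : x ∣ y := by
  obtain ⟨z, hz⟩ := h
  obtain ⟨w, rfl⟩ := (hp.dvd_or_dvd ⟨y, hz.symm⟩).resolve_left hpx
  refine ⟨w, mul_left_cancel₀ hp.ne_zero ?_⟩
  rw [hz, mul_left_comm]

variable {ι : Type*} {p : ι → M}

open scoped Classical in
theorem associated_prod_filter_dvd_of_dvd_prod (hp : ∀ i, Prime (p i))
    (hne : Pairwise fun i j => ¬Associated (p i) (p j)) (S : Finset ι) {x : M}
    (hx : x ∣ ∏ i ∈ S, p i) : Associated x (∏ i ∈ S with p i ∣ x, p i) := by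
  induction S using Finset.induction_on generalizing x with
  | empty => simpa using associated_one_iff_isUnit.mpr (isUnit_of_dvd_one hx)
  | @insert a S ha ih =>
    rw [prod_insert ha] at hx
    by_cases hax : p a ∣ x
    · obtain ⟨y, rfl⟩ := hax
      have hy : y ∣ ∏ i ∈ S, p i := (mul_dvd_mul_iff_left (hp a).ne_zero).mp hx
      have hfilter : {i ∈ S | p i ∣ p a * y} = {i ∈ S | p i ∣ y} := by
        refine filter_congr fun i hi => ⟨fun h => ?_, fun h => h.mul_left _⟩
        have hia : i ≠ a := fun hia => ha (hia ▸ hi)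
        exact ((hp i).dvd_mul.mp h).resolve_left
          fun hdvd => hne hia ((hp i).associated_of_dvd (hp a) hdvd)
      rw [filter_insert, if_pos (dvd_mul_right _ _),
        prod_insert fun hmem => ha (mem_filter.mp hmem).1, hfilter]
      exact (ih hy).mul_left (p a)
    · rw [filter_insert, if_neg hax]
      exact ih ((hp a).dvd_of_dvd_mul_left_of_not_dvd hax hx)

theorem le_of_associated_prod_pow [Fintype ι] (hp : ∀ i, Prime (p i))
    (hne : Pairwise fun i j => ¬Associated (p i) (p j)) {a b : ι → ℕ}
    (hab : Associated (∏ i, p i ^ a i) (∏ i, p i ^ b i)) (i : ι) : a i ≤ b i := by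
  classical
  have hdvd : p i ^ a i ∣ p i ^ b i * ∏ k ∈ univ.erase i, p k ^ b k := by
    rw [mul_prod_erase univ (fun k => p k ^ b k) (mem_univ i)]
    exact (dvd_prod_of_mem (fun k => p k ^ a k) (mem_univ i)).trans hab.dvd
  have hndvd : ¬p i ∣ ∏ k ∈ univ.erase i, p k ^ b k := fun h => by
    obtain ⟨k, hk, hdk⟩ := ((hp i).dvd_finsetProd_iff _).mp h
    exact hne (mem_erase.mp hk).1.symm
      ((hp i).associated_of_dvd (hp k) ((hp i).dvd_of_dvd_pow hdk))
  exact (pow_dvd_pow_iff (hp i).ne_zero (hp i).not_isUnit).mp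
    ((hp i).pow_dvd_of_dvd_mul_right _ hndvd hdvd)

theorem eq_of_associated_prod_pow [Fintype ι] (hp : ∀ i, Prime (p i))
    (hne : Pairwise fun i j => ¬Associated (p i) (p j)) {a b : ι → ℕ}
    (hab : Associated (∏ i, p i ^ a i) (∏ i, p i ^ b i)) : a = b :=
  funext fun i => (le_of_associated_prod_pow hp hne hab i).antisymm
    (le_of_associated_prod_pow hp hne hab.symm i)

end PairwiseNonassociatedPrimes

theorem Finset.prod_prod_filter_eq_prod_pow_card {α ι M : Type*} [CommMonoid M] [Fintype α]
    [Fintype ι] (P : α → ι → Prop) [∀ s i, Decidable (P s i)] (g : ι → M) :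
    ∏ s, ∏ i with P s i, g i = ∏ i, g i ^ #{s | P s i} := by
  simp_rw [prod_filter]
  rw [prod_comm]
  simp_rw [← prod_filter, prod_const]

theorem Fin.iff_lt_card_filter_of_isLowerSet {d : ℕ} {P : Fin d → Prop} [DecidablePred P]
    (hP : IsLowerSet {s | P s}) (s : Fin d) : P s ↔ (s : ℕ) < #{t | P t} := by
  constructor
  · intro hs
    have hsub : Iic s ⊆ ({t | P t} : Finset (Fin d)) := fun t ht =>
      mem_filter.mpr ⟨mem_univ t, hP (mem_Iic.mp ht) hs⟩
    have := card_le_card hsub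
    rw [Fin.card_Iic] at this
    omega
  · intro hlt
    by_contra hs
    have hsub : ({t | P t} : Finset (Fin d)) ⊆ Iio s := fun t ht =>
      mem_Iio.mpr (lt_of_not_ge fun hst => hs (hP hst (mem_filter.mp ht).2))
    have := card_le_card hsub
    rw [Fin.card_Iio] at this
    omega

theorem stmt_11_general (R : Type*) [CommRing R] [IsDomain R]
    (m : ℕ) (ℓ : Fin m → R) (hprime : ∀ j, Prime (ℓ j))
    (hdistinct : ∀ j k, j ≠ k → ¬ Associated (ℓ j) (ℓ k))
    (d : ℕ) (hd : 1 ≤ d) (f : Fin d → R)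
    (hchain : ∀ s t : Fin d, s ≤ t → f t ∣ f s)
    (hf1 : f ⟨0, hd⟩ ∣ ∏ j, ℓ j)
    (n : Fin m → ℕ)
    (hprod : Associated (∏ s, f s) (∏ j, ℓ j ^ n j)) :
    ∀ s : Fin d,
      Associated (f s) (∏ j ∈ Finset.univ.filter fun j => (s : ℕ) + 1 ≤ n j, ℓ j) := by
  classical
  have hsubprod (t : Fin d) : Associated (f t) (∏ j with ℓ j ∣ f t, ℓ j) :=
    associated_prod_filter_dvd_of_dvd_prod hprime hdistinct univ
      ((hchain ⟨0, hd⟩ t (Nat.zero_le _)).trans hf1)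
  have hcount : (fun j => #{t | ℓ j ∣ f t}) = n := by
    refine eq_of_associated_prod_pow hprime hdistinct (Associated.trans ?_ hprod)
    rw [← prod_prod_filter_eq_prod_pow_card (fun t j => ℓ j ∣ f t)]
    exact (Associated.prod _ _ _ fun t _ => hsubprod t).symm
  intro s
  convert hsubprod s using 2
  refine filter_congr fun j _ => ?_
  rw [Fin.iff_lt_card_filter_of_isLowerSet (P := (ℓ j ∣ f ·))
      (fun s t hts h => h.trans (hchain t s hts)) s,
    ← hcount, Nat.succ_le_iff]

/-- Let `R` be a UFD, `ℓ_1, …, ℓ_m` pairwise non-associated prime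
elements of `R`, and `d ≥ 1`, `f_1, …, f_d ∈ R` nonzero with `f_d ∣ f_{d-1} ∣ ⋯ ∣ f_1`
and `f_1 ∣ ℓ_1 ⋯ ℓ_m`. Suppose there are naturals `n_1, …, n_m` such that `∏_s f_s` is
associated to `∏_j ℓ_j^{n_j}`. Then for each `s`, `f_s` is associated to
`∏_{j : n_j ≥ s} ℓ_j`. (Here `f : Fin d → R` with `f ⟨0,_⟩` playing the role of `f_1`,
so that index `s : Fin d` corresponds to `f_{s+1}`.) -/
theorem stmt_11 (R : Type*) [CommRing R] [IsDomain R] [UniqueFactorizationMonoid R]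
    (m : ℕ) (ℓ : Fin m → R) (hprime : ∀ j, Prime (ℓ j))
    (hdistinct : ∀ j k, j ≠ k → ¬ Associated (ℓ j) (ℓ k))
    (d : ℕ) (hd : 1 ≤ d) (f : Fin d → R) (hf0 : ∀ s, f s ≠ 0)
    (hchain : ∀ s t : Fin d, s ≤ t → f t ∣ f s)
    (hf1 : f ⟨0, hd⟩ ∣ ∏ j, ℓ j)
    (n : Fin m → ℕ)
    (hprod : Associated (∏ s, f s) (∏ j, ℓ j ^ n j)) :
    ∀ s : Fin d,
      Associated (f s) (∏ j ∈ Finset.univ.filter fun j => (s : ℕ) + 1 ≤ n j, ℓ j) :=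
  stmt_11_general R m ℓ hprime hdistinct d hd f hchain hf1 n hprod
end
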